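/- arXiv:2207.05250 — 2 statements merged into one kernel-verified Lean document; each statement's English description precedes it below -/
import Mathlib

section
/- Let (X, 𝒜, μ) and (M, ℬ, ν) be σ-finite measure spaces and let p : X × M → [0, ∞) be measurable with ∫∫ p d(μ ⊗ ν) = 1. Define the marginals p_X(x) = ∫ p(x, m) dν(m) and p_M(m) = ∫ p(x, m) dμ(x), and the mutual information I(p) = ∫∫ p(x, m) log( p(x, m) / (p_X(x) p_M(m)) ) d(μ ⊗ ν), with the convention 0·log 0 = 0. Assume p(x, m) > 0 for (μ ⊗ ν)-a.e. (x, m), that p_X and p_M are finite a.e., and that the integrand of I(p) is integrable. Let L ≥ 1 be an integer and U : X × M → ℝ measurable, define g_U(x, m₀, …, m_L) = exp(U(x, m₀)) / ((1/(L+1)) ∑_{ℓ=0}^{L} exp(U(x, m_ℓ))) and the InfoNCE objective ℒ(U, L) = ∫_{X × M^{L+1}} p(x, m₀) (∏_{ℓ=1}^{L} p_M(m_ℓ)) log g_U d(μ ⊗ ν^{⊗(L+1)}), and assume the integrand of ℒ(U, L) is integrable. Then ℒ(U, L) ≤ I(p). -/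
/-!
Write `W = p(x, m₀) ∏_{ℓ ≠ 0} p_M(m_ℓ)` for the InfoNCE sampling density and `R = p / (p_X p_M)`
for the density ratio at `(x, m₀)`. Since `log t ≤ t - 1`, almost everywhere
`W log g ≤ W log R + W g / R - W`, and `W g / R = p_X(x) ∏_ℓ p_M(m_ℓ) g`. Under the product density
`p_X ⊗ p_M^{⊗(L+1)}` the samples `m₀, …, m_L` are exchangeable, and the `L + 1` relabelled critic
ratios sum to `L + 1`, so the last term integrates to `1`, as does `W`. Integrating out
`m₁, …, m_L` turns `∫ W log R` into `I(p)`.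
-/

open MeasureTheory Real Finset

theorem mul_log_le_mul_log_div_add {p px pm P G : ℝ} (hp : 0 < p) (hpx : 0 < px) (hpm : 0 < pm)
    (hP : 0 ≤ P) (hG : 0 < G) :
    p * P * log G ≤ p * log (p / (px * pm)) * P + (px * (pm * P) * G - p * P) := by
  have hR : 0 < p / (px * pm) := by positivity
  have hlog := log_le_sub_one_of_pos (div_pos hG hR)
  rw [log_div hG.ne' hR.ne'] at hlog
  have hratio : p * (G / (p / (px * pm))) = px * pm * G := by field_simp
  nlinarith [mul_le_mul_of_nonneg_left hlog (mul_nonneg hp.le hP)]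

theorem exp_div_sum_exp_le_one {ι : Type*} [Fintype ι] (v : ι → ℝ) (i : ι) :
    exp (v i) / ∑ j, exp (v j) ≤ 1 :=
  div_le_one_of_le₀ (single_le_sum (fun j _ => (exp_pos (v j)).le) (mem_univ i))
    (sum_nonneg fun j _ => (exp_pos (v j)).le)

theorem sum_exp_div_sum_exp {ι : Type*} [Fintype ι] [Nonempty ι] (v : ι → ℝ) :
    ∑ i, exp (v i) / ∑ j, exp (v j) = 1 := by
  rw [← sum_div, div_self (sum_pos (fun j _ => exp_pos (v j)) univ_nonempty).ne']

theorem div_one_div_mul (a c S : ℝ) : a / (1 / c * S) = c * (a / S) := by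
  rw [div_eq_mul_inv, one_div, mul_inv, inv_inv]
  ring

theorem Fin.prod_univ_erase_zero {R : Type*} [CommMonoid R] {n : ℕ} (f : Fin (n + 1) → R) :
    ∏ i ∈ univ.erase 0, f i = ∏ j : Fin n, f j.succ := by
  rw [Fin.univ_succ]
  simp

section

variable {X M : Type*} [MeasurableSpace X] [MeasurableSpace M] {μ : Measure X} {ν : Measure M}
  {n : ℕ}

theorem ae_integral_pos_of_ae_pos_prod [SFinite μ] [SFinite ν] {f : X × M → ℝ}
    (hf0 : ∀ z, 0 ≤ f z) (hf : Integrable f (μ.prod ν)) (hpos : ∀ᵐ z ∂μ.prod ν, 0 < f z)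
    (hν : ν ≠ 0) : ∀ᵐ x ∂μ, 0 < ∫ y, f (x, y) ∂ν := by
  filter_upwards [Measure.ae_ae_of_ae_prod hpos, hf.prod_right_ae] with x hx hxi
  have hsupp : Function.support (fun y => f (x, y)) =ᵐ[ν] Set.univ :=
    Filter.eventuallyEq_univ.2 (hx.mono fun y hy => hy.ne')
  rw [integral_pos_iff_support_of_nonneg (fun y => hf0 (x, y)) hxi, measure_congr hsupp]
  exact Measure.measure_univ_pos.2 hν

theorem ae_pos_and_marginals_pos [SFinite μ] [SFinite ν] {f : X × M → ℝ}
    (hf0 : ∀ z, 0 ≤ f z) (hf : ∫ z, f z ∂μ.prod ν ≠ 0) (hpos : ∀ᵐ z ∂μ.prod ν, 0 < f z) :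
    ∀ᵐ z ∂μ.prod ν, 0 < f z ∧ 0 < ∫ y, f (z.1, y) ∂ν ∧ 0 < ∫ x, f (x, z.2) ∂μ := by
  have hμν : μ.prod ν ≠ 0 := by rintro h; simp [h] at hf
  have hμ : μ ≠ 0 := by rintro rfl; simp at hμν
  have hν : ν ≠ 0 := by rintro rfl; simp at hμν
  have hfi := Integrable.of_integral_ne_zero hf
  have hX := ae_integral_pos_of_ae_pos_prod hf0 hfi hpos hν
  have hM := ae_integral_pos_of_ae_pos_prod (fun z => hf0 z.swap) hfi.swap
    (Measure.measurePreserving_swap.quasiMeasurePreserving.ae hpos) hμ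
  filter_upwards [hpos, Measure.quasiMeasurePreserving_fst.ae hX,
    Measure.quasiMeasurePreserving_snd.ae hM] with z h₁ h₂ h₃ using ⟨h₁, h₂, h₃⟩

variable (X M) in
def MeasurableEquiv.prodPiFinSucc (n : ℕ) : X × (Fin (n + 1) → M) ≃ᵐ (X × M) × (Fin n → M) :=
  ((MeasurableEquiv.refl X).prodCongr (MeasurableEquiv.piFinSuccAbove (fun _ => M) 0)).trans
    MeasurableEquiv.prodAssoc.symm

theorem MeasurableEquiv.prodPiFinSucc_apply (z : X × (Fin (n + 1) → M)) :
    prodPiFinSucc X M n z = ((z.1, z.2 0), Fin.tail z.2) :=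
  rfl

variable [SigmaFinite ν]

theorem integral_pi_comp_perm {ι E : Type*} [Fintype ι] [NormedAddCommGroup E] [NormedSpace ℝ E]
    (σ : Equiv.Perm ι) (f : (ι → M) → E) :
    ∫ m, f (m ∘ σ) ∂Measure.pi (fun _ => ν) = ∫ m, f m ∂Measure.pi (fun _ => ν) :=
  (measurePreserving_arrowCongr' (fun _ => ν) (fun _ => ν) σ.symm (MeasurableEquiv.refl M)
    fun _ => MeasurePreserving.id ν).integral_comp' f

theorem integral_prod_mul_exp_div_sum_exp {q : M → ℝ} (hq : Integrable q ν) {u : M → ℝ}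
    (hu : Measurable u) (i : Fin n) :
    ∫ m, (∏ ℓ, q (m ℓ)) * (exp (u (m i)) / ∑ ℓ, exp (u (m ℓ))) ∂Measure.pi (fun _ => ν) =
      (∫ a, q a ∂ν) ^ n / n := by
  set f : Fin n → (Fin n → M) → ℝ := fun j m =>
    (∏ ℓ, q (m ℓ)) * (exp (u (m j)) / ∑ ℓ, exp (u (m ℓ)))
  have hint : ∀ j, Integrable (f j) (Measure.pi fun _ => ν) := fun j =>
    (Integrable.fin_nat_prod fun _ => hq).mul_bdd (by fun_prop : Measurable _).aestronglyMeasurable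
      (.of_forall fun m => by
        rw [norm_of_nonneg (by positivity)]
        exact exp_div_sum_exp_le_one (fun ℓ => u (m ℓ)) j)
  have hswap : ∀ j, ∫ m, f j m ∂Measure.pi (fun _ => ν) = ∫ m, f i m ∂Measure.pi (fun _ => ν) := by
    intro j
    rw [← integral_pi_comp_perm (Equiv.swap i j) (f i)]
    congr 1 with m
    simp only [f, Function.comp_apply, Equiv.swap_apply_left]
    rw [Equiv.prod_comp (Equiv.swap i j) fun ℓ => q (m ℓ),
      Equiv.sum_comp (Equiv.swap i j) fun ℓ => exp (u (m ℓ))]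
  have hsum : ∀ m, ∑ j, f j m = ∏ ℓ, q (m ℓ) := fun m => by
    have : Nonempty (Fin n) := ⟨i⟩
    rw [← mul_sum, sum_exp_div_sum_exp, mul_one]
  have hn : (n : ℝ) ≠ 0 := Nat.cast_ne_zero.2 (Fin.pos i).ne'
  calc ∫ m, f i m ∂Measure.pi (fun _ => ν)
      = (∑ j, ∫ m, f j m ∂Measure.pi (fun _ => ν)) / n := by
        rw [sum_congr rfl fun j _ => hswap j, sum_const, card_univ, Fintype.card_fin, nsmul_eq_mul,
          mul_div_cancel_left₀ _ hn]
    _ = (∫ a, q a ∂ν) ^ n / n := by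
        rw [← integral_finsetSum _ fun j _ => hint j]
        simp only [hsum, integral_fintype_prod_eq_pow, Fintype.card_fin]

theorem MeasureTheory.Integrable.mul_prod_mul_exp_div_mean_exp {f : X → ℝ}
    (hf : Integrable f μ) {q : M → ℝ} (hq : Integrable q ν) {U : X × M → ℝ} (hU : Measurable U)
    (i : Fin (n + 1)) :
    Integrable (fun z : X × (Fin (n + 1) → M) => f z.1 * (∏ ℓ, q (z.2 ℓ)) *
        (exp (U (z.1, z.2 i)) / (1 / ((n : ℝ) + 1) * ∑ ℓ, exp (U (z.1, z.2 ℓ)))))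
      (μ.prod (Measure.pi fun _ => ν)) := by
  simp only [div_one_div_mul]
  refine (hf.mul_prod (Integrable.fin_nat_prod fun _ => hq)).mul_bdd
    (c := (n : ℝ) + 1) (by fun_prop : Measurable _).aestronglyMeasurable (.of_forall fun z => ?_)
  rw [norm_of_nonneg (by positivity)]
  exact mul_le_of_le_one_right (by positivity) (exp_div_sum_exp_le_one (fun ℓ => U (z.1, z.2 ℓ)) i)

variable [SigmaFinite μ]

theorem measurePreserving_prodPiFinSucc (n : ℕ) :
    MeasurePreserving (MeasurableEquiv.prodPiFinSucc X M n) (μ.prod (Measure.pi fun _ => ν))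
      ((μ.prod ν).prod (Measure.pi fun _ => ν)) :=
  (measurePreserving_prodAssoc μ ν _).symm MeasurableEquiv.prodAssoc |>.comp <|
    (MeasurePreserving.id μ).prod (measurePreserving_piFinSuccAbove (fun _ => ν) 0)

theorem ae_comp_zero_of_ae_prod {P : X × M → Prop} (h : ∀ᵐ y ∂μ.prod ν, P y) :
    ∀ᵐ z ∂μ.prod (Measure.pi fun _ : Fin (n + 1) => ν), P (z.1, z.2 0) :=
  (Measure.quasiMeasurePreserving_fst.comp
    (measurePreserving_prodPiFinSucc n).quasiMeasurePreserving).ae h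

theorem comp_zero_mul_prod_erase_zero_eq (F : X × M → ℝ) (q : M → ℝ) :
    (fun z : X × (Fin (n + 1) → M) => F (z.1, z.2 0) * ∏ ℓ ∈ univ.erase 0, q (z.2 ℓ)) =
      (fun y : (X × M) × (Fin n → M) => F y.1 * ∏ j, q (y.2 j)) ∘
        MeasurableEquiv.prodPiFinSucc X M n := by
  ext z
  simp [MeasurableEquiv.prodPiFinSucc_apply, Fin.prod_univ_erase_zero, Fin.tail]

theorem MeasureTheory.Integrable.comp_zero_mul_prod_erase_zero {F : X × M → ℝ}
    (hF : Integrable F (μ.prod ν)) {q : M → ℝ} (hq : Integrable q ν) :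
    Integrable (fun z : X × (Fin (n + 1) → M) => F (z.1, z.2 0) * ∏ ℓ ∈ univ.erase 0, q (z.2 ℓ))
      (μ.prod (Measure.pi fun _ => ν)) := by
  rw [comp_zero_mul_prod_erase_zero_eq, (measurePreserving_prodPiFinSucc n).integrable_comp_emb
    (MeasurableEquiv.measurableEmbedding _)]
  exact hF.mul_prod (Integrable.fin_nat_prod fun _ => hq)

theorem integral_comp_zero_mul_prod_erase_zero (F : X × M → ℝ) (q : M → ℝ) :
    ∫ z : X × (Fin (n + 1) → M), F (z.1, z.2 0) * ∏ ℓ ∈ univ.erase 0, q (z.2 ℓ)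
        ∂μ.prod (Measure.pi fun _ => ν) =
      (∫ y, F y ∂μ.prod ν) * (∫ a, q a ∂ν) ^ n := by
  rw [comp_zero_mul_prod_erase_zero_eq, Function.comp_def,
    (measurePreserving_prodPiFinSucc n).integral_comp' (fun y => F y.1 * ∏ j, q (y.2 j)),
    integral_prod_mul F (fun m : Fin n → M => ∏ j, q (m j)), integral_fintype_prod_eq_pow,
    Fintype.card_fin]

theorem integral_mul_prod_mul_exp_div_mean_exp {f : X → ℝ} (hf : Integrable f μ)
    {q : M → ℝ} (hq : Integrable q ν) {U : X × M → ℝ} (hU : Measurable U) (i : Fin (n + 1)) :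
    ∫ z : X × (Fin (n + 1) → M), f z.1 * (∏ ℓ, q (z.2 ℓ)) *
        (exp (U (z.1, z.2 i)) / (1 / ((n : ℝ) + 1) * ∑ ℓ, exp (U (z.1, z.2 ℓ))))
        ∂μ.prod (Measure.pi fun _ => ν) =
      (∫ x, f x ∂μ) * (∫ a, q a ∂ν) ^ (n + 1) := by
  rw [integral_prod _ (hf.mul_prod_mul_exp_div_mean_exp hq hU i), ← integral_mul_const]
  congr 1 with x
  have hslice := integral_prod_mul_exp_div_sum_exp (ν := ν) hq
    (hU.comp (measurable_prodMk_left (x := x))) i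
  push_cast at hslice
  simp only [div_one_div_mul, Function.comp_apply] at hslice ⊢
  calc ∫ m, f x * (∏ ℓ, q (m ℓ)) * (((n : ℝ) + 1) * (exp (U (x, m i)) / ∑ ℓ, exp (U (x, m ℓ))))
        ∂Measure.pi (fun _ => ν)
      = f x * ((n + 1) * ∫ m, (∏ ℓ, q (m ℓ)) * (exp (U (x, m i)) / ∑ ℓ, exp (U (x, m ℓ)))
        ∂Measure.pi (fun _ => ν)) := by
        rw [← integral_const_mul, ← integral_const_mul]
        congr 1 with m
        ring
    _ = f x * (∫ a, q a ∂ν) ^ (n + 1) := by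
        rw [hslice, mul_div_cancel₀ _ (by positivity)]

end

theorem stmt4_general {X M : Type*} [MeasurableSpace X] [MeasurableSpace M]
    (μ : Measure X) (ν : Measure M) [SigmaFinite μ] [SigmaFinite ν]
    (p : X × M → ℝ) (hp0 : ∀ z, 0 ≤ p z)
    (hp1 : ∫ z, p z ∂(μ.prod ν) = 1)
    (pX : X → ℝ) (hpX : ∀ x, pX x = ∫ a, p (x, a) ∂ν)
    (pM : M → ℝ) (hpM : ∀ a, pM a = ∫ x, p (x, a) ∂μ)
    (hppos : ∀ᵐ z ∂(μ.prod ν), 0 < p z)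
    (hIint : Integrable (fun z : X × M => p z * Real.log (p z / (pX z.1 * pM z.2))) (μ.prod ν))
    (L : ℕ)
    (U : X × M → ℝ) (hU : Measurable U)
    (g : X → (Fin (L + 1) → M) → ℝ)
    (hg : ∀ x ms, g x ms =
      Real.exp (U (x, ms 0)) / ((1 / ((L : ℝ) + 1)) * ∑ ℓ, Real.exp (U (x, ms ℓ))))
    (hℒint : Integrable (fun z : X × (Fin (L + 1) → M) =>
        p (z.1, z.2 0) * (∏ ℓ ∈ Finset.univ.erase (0 : Fin (L + 1)), pM (z.2 ℓ)) *
          Real.log (g z.1 z.2))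
      (μ.prod (Measure.pi fun _ : Fin (L + 1) => ν))) :
    (∫ z : X × (Fin (L + 1) → M),
        p (z.1, z.2 0) * (∏ ℓ ∈ Finset.univ.erase (0 : Fin (L + 1)), pM (z.2 ℓ)) *
          Real.log (g z.1 z.2)
        ∂(μ.prod (Measure.pi fun _ : Fin (L + 1) => ν))) ≤
      ∫ z, p z * Real.log (p z / (pX z.1 * pM z.2)) ∂(μ.prod ν) := by
  have hp : Integrable p (μ.prod ν) := .of_integral_ne_zero (by simp [hp1])
  have hpX' : pX = fun x => ∫ a, p (x, a) ∂ν := funext hpX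
  have hpM' : pM = fun a => ∫ x, p (x, a) ∂μ := funext hpM
  have hpXint : Integrable pX μ := hpX' ▸ hp.integral_prod_left
  have hpMint : Integrable pM ν := hpM' ▸ hp.integral_prod_right
  have hpX1 : ∫ x, pX x ∂μ = 1 := by rw [hpX', ← integral_prod _ hp, hp1]
  have hpM1 : ∫ a, pM a ∂ν = 1 := by rw [hpM', ← integral_prod_symm _ hp, hp1]
  have hpos : ∀ᵐ z ∂μ.prod (Measure.pi fun _ : Fin (L + 1) => ν),
      0 < p (z.1, z.2 0) ∧ 0 < pX z.1 ∧ 0 < pM (z.2 0) := by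
    simpa only [← hpX, ← hpM] using
      ae_comp_zero_of_ae_prod (ae_pos_and_marginals_pos hp0 (by simp [hp1]) hppos)
  have hI := hIint.comp_zero_mul_prod_erase_zero (n := L) hpMint
  have hW := hp.comp_zero_mul_prod_erase_zero (n := L) hpMint
  have hQ := hpXint.mul_prod_mul_exp_div_mean_exp hpMint hU (0 : Fin (L + 1))
  simp only [hg] at hℒint ⊢
  calc _ ≤ ∫ z : X × (Fin (L + 1) → M),
          p (z.1, z.2 0) * log (p (z.1, z.2 0) / (pX z.1 * pM (z.2 0))) *
              ∏ ℓ ∈ univ.erase 0, pM (z.2 ℓ) +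
            (pX z.1 * (∏ ℓ, pM (z.2 ℓ)) *
                (exp (U (z.1, z.2 0)) / (1 / ((L : ℝ) + 1) * ∑ ℓ, exp (U (z.1, z.2 ℓ)))) -
              p (z.1, z.2 0) * ∏ ℓ ∈ univ.erase 0, pM (z.2 ℓ))
          ∂μ.prod (Measure.pi fun _ => ν) := by
        refine integral_mono_ae hℒint (hI.add (hQ.sub' hW)) ?_
        filter_upwards [hpos] with z ⟨hpz, hpXz, hpMz⟩
        rw [← mul_prod_erase univ (fun ℓ => pM (z.2 ℓ)) (mem_univ 0)]
        exact mul_log_le_mul_log_div_add hpz hpXz hpMz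
          (prod_nonneg fun ℓ _ => hpM (z.2 ℓ) ▸ integral_nonneg fun x => hp0 _) (by positivity)
    _ = ∫ z, p z * log (p z / (pX z.1 * pM z.2)) ∂μ.prod ν := by
        rw [integral_add hI (hQ.sub' hW), integral_sub hQ hW,
          integral_comp_zero_mul_prod_erase_zero (fun y => p y * log (p y / (pX y.1 * pM y.2))),
          integral_comp_zero_mul_prod_erase_zero,
          integral_mul_prod_mul_exp_div_mean_exp hpXint hpMint hU, hpX1, hpM1, hp1]
        simp

/-- Proposition 1 (InfoNCE lower bound), density form: for any critic `U` and any
number `L ≥ 1` of contrastive samples, the InfoNCE objective `ℒ(U, L)` is a lower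
bound on the mutual information `I(p)`. -/
theorem stmt4 {X M : Type*} [MeasurableSpace X] [MeasurableSpace M]
    (μ : Measure X) (ν : Measure M) [SigmaFinite μ] [SigmaFinite ν]
    (p : X × M → ℝ) (hp : Measurable p) (hp0 : ∀ z, 0 ≤ p z)
    (hp1 : ∫ z, p z ∂(μ.prod ν) = 1)
    (pX : X → ℝ) (hpX : ∀ x, pX x = ∫ a, p (x, a) ∂ν)
    (pM : M → ℝ) (hpM : ∀ a, pM a = ∫ x, p (x, a) ∂μ)
    (hppos : ∀ᵐ z ∂(μ.prod ν), 0 < p z)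
    (hpXfin : ∀ᵐ x ∂μ, Integrable (fun a => p (x, a)) ν)
    (hpMfin : ∀ᵐ a ∂ν, Integrable (fun x => p (x, a)) μ)
    (hIint : Integrable (fun z : X × M => p z * Real.log (p z / (pX z.1 * pM z.2))) (μ.prod ν))
    (L : ℕ) (hL : 1 ≤ L)
    (U : X × M → ℝ) (hU : Measurable U)
    (g : X → (Fin (L + 1) → M) → ℝ)
    (hg : ∀ x ms, g x ms =
      Real.exp (U (x, ms 0)) / ((1 / ((L : ℝ) + 1)) * ∑ ℓ, Real.exp (U (x, ms ℓ))))
    (hℒint : Integrable (fun z : X × (Fin (L + 1) → M) =>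
        p (z.1, z.2 0) * (∏ ℓ ∈ Finset.univ.erase (0 : Fin (L + 1)), pM (z.2 ℓ)) *
          Real.log (g z.1 z.2))
      (μ.prod (Measure.pi fun _ : Fin (L + 1) => ν))) :
    (∫ z : X × (Fin (L + 1) → M),
        p (z.1, z.2 0) * (∏ ℓ ∈ Finset.univ.erase (0 : Fin (L + 1)), pM (z.2 ℓ)) *
          Real.log (g z.1 z.2)
        ∂(μ.prod (Measure.pi fun _ : Fin (L + 1) => ν))) ≤
      ∫ z, p z * Real.log (p z / (pX z.1 * pM z.2)) ∂(μ.prod ν) :=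
  stmt4_general μ ν p hp0 hp1 pX hpX pM hpM hppos hIint L U hU g hg hℒint
end

section
/- Let (Ω, ℱ, P) be a probability space, let (M, ℬ, ν) be a measurable space with ν a probability measure, let (X, 𝒜) be a measurable space, let L ≥ 1 be an integer, let m₀, m₁, …, m_L : Ω → M be independent random variables each with law ν, and let x : Ω → X be a random variable independent of (m₀, …, m_L). Let U : X × M → ℝ be measurable. Then for every index j ∈ {0, 1, …, L}, E[ exp(U(x, m_j)) / ((1/(L+1)) ∑_{ℓ=0}^{L} exp(U(x, m_ℓ))) ] = 1. -/
/-!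
Conditionally on `x`, the `L + 1` softmax weights `exp (U (x, m i)) / ∑ ℓ, exp (U (x, m ℓ))`
sum to `1` pointwise, and they are exchangeable: the joint law of `(x, m)` is
`law x ⊗ ν^⊗(L+1)`, which is invariant under permuting the coordinates of `m`. Hence each
weight has expectation `1 / (L + 1)`.
-/

open MeasureTheory ProbabilityTheory Finset Real

section ContrastiveWeight

variable {ι X M : Type*} [Fintype ι]

noncomputable def contrastiveWeight (U : X × M → ℝ) (i : ι) (p : X × (ι → M)) : ℝ :=
  exp (U (p.1, p.2 i)) / ∑ ℓ, exp (U (p.1, p.2 ℓ))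

variable (U : X × M → ℝ)

lemma sum_exp_pos [Nonempty ι] (p : X × (ι → M)) : 0 < ∑ ℓ, exp (U (p.1, p.2 ℓ)) :=
  Finset.sum_pos (fun _ _ => exp_pos _) univ_nonempty

lemma contrastiveWeight_nonneg (i : ι) (p : X × (ι → M)) : 0 ≤ contrastiveWeight U i p :=
  div_nonneg (exp_pos _).le (sum_nonneg fun _ _ => (exp_pos _).le)

lemma contrastiveWeight_le_one (i : ι) (p : X × (ι → M)) : contrastiveWeight U i p ≤ 1 := by
  have : Nonempty ι := ⟨i⟩
  rw [contrastiveWeight, div_le_one (sum_exp_pos U p)]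
  exact single_le_sum (f := fun ℓ => exp (U (p.1, p.2 ℓ))) (fun _ _ => (exp_pos _).le)
    (mem_univ i)

lemma sum_contrastiveWeight [Nonempty ι] (p : X × (ι → M)) :
    ∑ i, contrastiveWeight U i p = 1 := by
  simp only [contrastiveWeight, ← sum_div]
  exact div_self (sum_exp_pos U p).ne'

lemma contrastiveWeight_comp_perm (σ : Equiv.Perm ι) (i : ι) (a : X) (w : ι → M) :
    contrastiveWeight U i (a, w ∘ σ) = contrastiveWeight U (σ i) (a, w) := by
  simp only [contrastiveWeight, Function.comp_apply,
    Equiv.sum_comp σ fun ℓ => exp (U (a, w ℓ))]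

variable [MeasurableSpace X] [MeasurableSpace M]

lemma measurable_contrastiveWeight (hU : Measurable U) (i : ι) :
    Measurable (contrastiveWeight U i) := by
  have hexp (k : ι) : Measurable fun p : X × (ι → M) => exp (U (p.1, p.2 k)) := by fun_prop
  exact (hexp i).div (Finset.measurable_sum _ fun k _ => hexp k)

lemma integrable_contrastiveWeight (μ : Measure (X × (ι → M))) [IsFiniteMeasure μ]
    (hU : Measurable U) (i : ι) : Integrable (contrastiveWeight U i) μ :=
  .of_bound (measurable_contrastiveWeight U hU i).aestronglyMeasurable 1 <|
    ae_of_all _ fun p => by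
      rw [Real.norm_of_nonneg (contrastiveWeight_nonneg U i p)]
      exact contrastiveWeight_le_one U i p

end ContrastiveWeight

lemma integral_prod_pi_comp_perm {ι X M E : Type*} [Fintype ι] [MeasurableSpace X]
    [MeasurableSpace M] [NormedAddCommGroup E] [NormedSpace ℝ E]
    (μ : Measure X) [SFinite μ] (ν : Measure M) [SigmaFinite ν] (σ : Equiv.Perm ι)
    (F : X × (ι → M) → E) :
    ∫ p, F (p.1, p.2 ∘ σ) ∂μ.prod (Measure.pi fun _ => ν) =
      ∫ p, F p ∂μ.prod (Measure.pi fun _ => ν) := by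
  let e := (MeasurableEquiv.refl X).prodCongr (MeasurableEquiv.arrowCongr' σ.symm (.refl M))
  have he : MeasurePreserving e (μ.prod (Measure.pi fun _ => ν))
      (μ.prod (Measure.pi fun _ => ν)) :=
    (MeasurePreserving.id μ).prod
      (measurePreserving_arrowCongr' _ _ σ.symm (.refl M) fun _ => .id ν)
  exact he.integral_comp' F

lemma integral_contrastiveWeight {ι X M : Type*} [Fintype ι] [MeasurableSpace X]
    [MeasurableSpace M] (μ : Measure X) [IsProbabilityMeasure μ] (ν : Measure M)
    [IsProbabilityMeasure ν] {U : X × M → ℝ} (hU : Measurable U) (j : ι) :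
    ∫ p, contrastiveWeight U j p ∂μ.prod (Measure.pi fun _ => ν) =
      (Fintype.card ι : ℝ)⁻¹ := by
  classical
  have : Nonempty ι := ⟨j⟩
  set μM := μ.prod (Measure.pi fun _ : ι => ν)
  have hexch (k : ι) :
      ∫ p, contrastiveWeight U k p ∂μM = ∫ p, contrastiveWeight U j p ∂μM := by
    simpa [contrastiveWeight_comp_perm] using
      integral_prod_pi_comp_perm μ ν (Equiv.swap k j) (contrastiveWeight U j)
  have hsum : (Fintype.card ι : ℝ) * ∫ p, contrastiveWeight U j p ∂μM = 1 := calc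
    _ = ∑ k, ∫ p, contrastiveWeight U k p ∂μM := by simp [hexch]
    _ = ∫ p, ∑ k, contrastiveWeight U k p ∂μM :=
      (integral_finsetSum _ fun k _ => integrable_contrastiveWeight U μM hU k).symm
    _ = 1 := by simp [sum_contrastiveWeight]
  exact eq_inv_of_mul_eq_one_right hsum

theorem stmt9_general {Ω : Type*} [MeasurableSpace Ω] (P : Measure Ω) [IsProbabilityMeasure P]
    {M : Type*} [MeasurableSpace M] (ν : Measure M)
    {X : Type*} [MeasurableSpace X]
    (L : ℕ) (m : Fin (L + 1) → Ω → M)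
    (hmeas : ∀ i, Measurable (m i))
    (hindep : iIndepFun m P)
    (hlaw : ∀ i, Measure.map (m i) P = ν)
    (x : Ω → X) (hx : Measurable x)
    (hxm : IndepFun x (fun ω (i : Fin (L + 1)) => m i ω) P)
    (U : X × M → ℝ) (hU : Measurable U)
    (j : Fin (L + 1)) :
    ∫ ω, Real.exp (U (x ω, m j ω)) /
        ((1 / ((L : ℝ) + 1)) * ∑ ℓ, Real.exp (U (x ω, m ℓ ω))) ∂P = 1 := by
  have : IsProbabilityMeasure ν :=
    hlaw 0 ▸ Measure.isProbabilityMeasure_map (hmeas 0).aemeasurable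
  have : IsProbabilityMeasure (P.map x) := Measure.isProbabilityMeasure_map hx.aemeasurable
  set v : Ω → Fin (L + 1) → M := fun ω i => m i ω
  have hv : Measurable v := measurable_pi_lambda _ hmeas
  have hlaw_v : P.map v = Measure.pi fun _ => ν := by
    rw [hindep.map_fun_eq_pi_map fun i => (hmeas i).aemeasurable]
    simp only [hlaw]
  have hjoint : P.map (fun ω => (x ω, v ω)) = (P.map x).prod (Measure.pi fun _ => ν) :=
    hlaw_v ▸ hxm.map_prod_eq_prod_map_map hx.aemeasurable hv.aemeasurable
  have hweight (ω : Ω) : Real.exp (U (x ω, m j ω)) /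
      ((1 / ((L : ℝ) + 1)) * ∑ ℓ, Real.exp (U (x ω, m ℓ ω))) =
      ((L : ℝ) + 1) * contrastiveWeight U j (x ω, v ω) := by
    simp only [contrastiveWeight, v]
    field_simp
  calc _ = ((L : ℝ) + 1) * ∫ ω, contrastiveWeight U j (x ω, v ω) ∂P := by
        simp only [hweight, integral_const_mul]
    _ = ((L : ℝ) + 1) *
          ∫ p, contrastiveWeight U j p ∂(P.map x).prod (Measure.pi fun _ => ν) := by
        rw [← hjoint, integral_map (hx.prodMk hv).aemeasurable
          (measurable_contrastiveWeight U hU j).aestronglyMeasurable]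
    _ = 1 := by
        rw [integral_contrastiveWeight _ _ hU, Fintype.card_fin]
        push_cast
        exact mul_inv_cancel₀ (by positivity)

/-- Normalisation of the InfoNCE contrastive weight: if `m 0, …, m L` are i.i.d. with
law `ν` and `x` is independent of `(m 0, …, m L)`, then for every `j` the weight
`exp (U (x, m j)) / ((1/(L+1)) ∑ ℓ, exp (U (x, m ℓ)))` has expectation `1`. -/
theorem stmt9 {Ω : Type*} [MeasurableSpace Ω] (P : Measure Ω) [IsProbabilityMeasure P]
    {M : Type*} [MeasurableSpace M] (ν : Measure M) [IsProbabilityMeasure ν]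
    {X : Type*} [MeasurableSpace X]
    (L : ℕ) (hL : 1 ≤ L) (m : Fin (L + 1) → Ω → M)
    (hmeas : ∀ i, Measurable (m i))
    (hindep : iIndepFun m P)
    (hlaw : ∀ i, Measure.map (m i) P = ν)
    (x : Ω → X) (hx : Measurable x)
    (hxm : IndepFun x (fun ω (i : Fin (L + 1)) => m i ω) P)
    (U : X × M → ℝ) (hU : Measurable U)
    (j : Fin (L + 1)) :
    ∫ ω, Real.exp (U (x ω, m j ω)) /
        ((1 / ((L : ℝ) + 1)) * ∑ ℓ, Real.exp (U (x ω, m ℓ ω))) ∂P = 1 :=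
  stmt9_general P ν L m hmeas hindep hlaw x hx hxm U hU j
end
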